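/- Trade probability is maximized at the lowest symmetric implementable price (uniform case): let A ∈ (0,1), assume the A-large condition (every (p1,p2) ∈ P satisfies p1 ≤ A, p2 ≤ A and |p1 − p2| ≤ 1 − A), assume {p ∈ (0,1] : H(p,p) ≤ 0} is nonempty, and let p̲ = inf{p ∈ (0,1] : H(p,p) ≤ 0}. Then (p̲,p̲) ∈ P and for every (p1,p2) ∈ P, p1·p2 ≥ p̲², i.e. the trade probability 1 − p1·p2 over P is maximized at (p̲, p̲). -/

import Mathlib

/-- Demand of seller 1 when ranked second (uniform match utilities). -/
noncomputable def D12 (A p1 p2 : ℝ) : ℝ := -A^2/2 + p1^2/2 - p1*p2 + A - p1 + p2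

/-- Demand of seller 2 when ranked second (uniform match utilities). -/
noncomputable def D22 (A p1 p2 : ℝ) : ℝ := -A^2/2 + p2^2/2 - p1*p2 + A + p1 - p2

/-- The bonus from being ranked first instead of second (uniform case). -/
noncomputable def bonus (A p1 p2 : ℝ) : ℝ := (1-A)^2 - (1/2)*(p1-p2)^2

/-- Seller 1's optimal deviation value when ranked second. -/
noncomputable def M1 (A p2 : ℝ) : ℝ :=
  sSup ((fun p' => p' * D12 A p' p2) '' Set.Icc (0:ℝ) 1)

/-- Seller 2's optimal deviation value when ranked second. -/
noncomputable def M2 (A p1 : ℝ) : ℝ :=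
  sSup ((fun p' => p' * D22 A p1 p') '' Set.Icc (0:ℝ) 1)

/-- The function whose nonpositivity characterizes implementable prices. -/
noncomputable def H (A p1 p2 : ℝ) : ℝ := M1 A p2 / p1 + M2 A p1 / p2 + p1*p2 - 1

/-- The set of implementable prices. -/
def implementableP (A : ℝ) : Set (ℝ × ℝ) :=
  {q | 0 < q.1 ∧ q.1 ≤ 1 ∧ 0 < q.2 ∧ q.2 ≤ 1 ∧ H A q.1 q.2 ≤ 0}

/-- The set of implementable search orders at prices `(p1, p2)`. -/
def phi (A p1 p2 : ℝ) : Set ℝ :=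
  {α | α ∈ Set.Icc (0:ℝ) 1
    ∧ M1 A p2 ≤ p1 * D12 A p1 p2 + α * p1 * bonus A p1 p2
    ∧ M2 A p1 ≤ p2 * D22 A p1 p2 + (1-α) * p2 * bonus A p1 p2}

/-!
Since `M2 A x = M1 A x`, clearing denominators turns `H A q₁ q₂ ≤ 0` into
`q₁ M(q₁) + q₂ M(q₂) ≤ (1 - q₁q₂) q₁q₂` with `M = M1 A`. As a supremum of functions that are
affine and nondecreasing in the rival's price, `M` is convex, monotone and nonnegative, so the
geometric mean `g = √(q₁q₂)` satisfies `2 g M(g) ≤ q₁ M(q₁) + q₂ M(q₂)` and is a symmetric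
implementable price with `g² = q₁q₂`. Monotonicity of `p ↦ p M(p)` also shows that the set of
symmetric implementable prices contains its infimum, which is positive because `M ≥ A²/16`.
-/

open Set

def symImplementable (A : ℝ) : Set ℝ := {p | p ∈ Ioc (0:ℝ) 1 ∧ H A p p ≤ 0}

lemma M2_eq_M1 (A x : ℝ) : M2 A x = M1 A x := by
  unfold M1 M2
  congr 1
  refine image_congr fun t _ => ?_
  simp only [D12, D22]
  ring

lemma bddAbove_deviation_image (A x : ℝ) :
    BddAbove ((fun p' => p' * D12 A p' x) '' Icc (0:ℝ) 1) :=
  isCompact_Icc.bddAbove_image (by unfold D12; fun_prop)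

lemma le_M1 (A x : ℝ) {t : ℝ} (ht : t ∈ Icc (0:ℝ) 1) : t * D12 A t x ≤ M1 A x :=
  le_csSup (bddAbove_deviation_image A x) ⟨t, ht, rfl⟩

lemma M1_le {A x c : ℝ} (h : ∀ t ∈ Icc (0:ℝ) 1, t * D12 A t x ≤ c) : M1 A x ≤ c :=
  csSup_le ⟨_, 0, left_mem_Icc.mpr zero_le_one, rfl⟩ (forall_mem_image.mpr h)

lemma M1_nonneg (A x : ℝ) : 0 ≤ M1 A x := by
  simpa using le_M1 A x (left_mem_Icc.mpr zero_le_one)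

lemma M1_monotone (A : ℝ) : Monotone (M1 A) := fun x y hxy =>
  M1_le fun t ht => by
    have hslope : t * D12 A t x ≤ t * D12 A t y := by
      simp only [D12]
      nlinarith [mul_nonneg (mul_nonneg ht.1 (sub_nonneg.mpr ht.2)) (sub_nonneg.mpr hxy)]
    exact hslope.trans (le_M1 A y ht)

lemma M1_convexOn (A : ℝ) : ConvexOn ℝ univ (M1 A) := by
  refine ⟨convex_univ, fun x _ y _ a b ha hb hab => M1_le fun t ht => ?_⟩
  have haffine : t * D12 A t (a • x + b • y) = a * (t * D12 A t x) + b * (t * D12 A t y) := by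
    simp only [D12, smul_eq_mul]
    linear_combination (A ^ 2 / 2 * t - t ^ 3 / 2 - A * t + t ^ 2) * hab
  rw [haffine, smul_eq_mul, smul_eq_mul]
  gcongr
  exacts [le_M1 A x ht, le_M1 A y ht]

lemma sq_div_sixteen_le_M1 {A x : ℝ} (hA : A ∈ Ioc (0:ℝ) 1) (hx : 0 ≤ x) :
    A ^ 2 / 16 ≤ M1 A x := by
  obtain ⟨hA0, hA1⟩ := hA
  refine le_trans ?_ (le_M1 A x (t := A / 2) ⟨by linarith, by linarith⟩)
  simp only [D12]
  nlinarith [mul_nonneg hA0.le hx, mul_nonneg (mul_nonneg hA0.le hA0.le) (sub_nonneg.mpr hA1)]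

lemma H_nonpos_iff {A q₁ q₂ : ℝ} (h₁ : 0 < q₁) (h₂ : 0 < q₂) :
    H A q₁ q₂ ≤ 0 ↔ q₁ * M1 A q₁ + q₂ * M1 A q₂ ≤ (1 - q₁ * q₂) * (q₁ * q₂) := by
  have hexpand : H A q₁ q₂ * (q₁ * q₂) =
      q₁ * M1 A q₁ + q₂ * M1 A q₂ - (1 - q₁ * q₂) * (q₁ * q₂) := by
    unfold H
    rw [M2_eq_M1]
    field_simp
    ring
  rw [← mul_le_mul_iff_of_pos_right (mul_pos h₁ h₂), zero_mul, hexpand, sub_nonpos]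

lemma two_mul_sqrt_mul_apply_sqrt_le {f : ℝ → ℝ} (hmono : Monotone f)
    (hconv : ConvexOn ℝ univ f) (hnonneg : ∀ x, 0 ≤ f x) {a b : ℝ} (ha : 0 ≤ a) (hb : 0 ≤ b) :
    2 * (√(a * b) * f √(a * b)) ≤ a * f a + b * f b := by
  have hgm : √(a * b) ≤ (a + b) / 2 := by
    rw [Real.sqrt_le_left (by positivity)]
    nlinarith [sq_nonneg (a - b)]
  have hmid : f ((a + b) / 2) ≤ (f a + f b) / 2 := by
    calc f ((a + b) / 2) = f ((1 / 2 : ℝ) • a + (1 / 2 : ℝ) • b) := by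
          rw [smul_eq_mul, smul_eq_mul]; ring_nf
      _ ≤ (1 / 2 : ℝ) • f a + (1 / 2 : ℝ) • f b :=
          hconv.2 (mem_univ a) (mem_univ b) (by norm_num) (by norm_num) (by norm_num)
      _ = (f a + f b) / 2 := by rw [smul_eq_mul, smul_eq_mul]; ring
  have hchebyshev : 0 ≤ (a - b) * (f a - f b) := by
    rcases le_total a b with hab | hab
    · exact mul_nonneg_of_nonpos_of_nonpos (sub_nonpos.mpr hab) (sub_nonpos.mpr (hmono hab))
    · exact mul_nonneg (sub_nonneg.mpr hab) (sub_nonneg.mpr (hmono hab))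
  calc 2 * (√(a * b) * f √(a * b))
      ≤ 2 * ((a + b) / 2 * f ((a + b) / 2)) := by gcongr; exacts [hnonneg _, hmono hgm]
    _ ≤ 2 * ((a + b) / 2 * ((f a + f b) / 2)) := by gcongr
    _ ≤ a * f a + b * f b := by nlinarith

lemma sqrt_mul_mem_symImplementable {A q₁ q₂ : ℝ} (hq : (q₁, q₂) ∈ implementableP A) :
    √(q₁ * q₂) ∈ symImplementable A := by
  obtain ⟨h₁, h₁', h₂, h₂', hH⟩ := hq
  have hpos : 0 < q₁ * q₂ := mul_pos h₁ h₂
  have hg : 0 < √(q₁ * q₂) := Real.sqrt_pos.mpr hpos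
  refine ⟨⟨hg, Real.sqrt_le_one.mpr (mul_le_one₀ h₁' h₂.le h₂')⟩, ?_⟩
  rw [H_nonpos_iff hg hg, Real.mul_self_sqrt hpos.le]
  have hkey := two_mul_sqrt_mul_apply_sqrt_le (M1_monotone A) (M1_convexOn A) (M1_nonneg A)
    h₁.le h₂.le
  linarith [(H_nonpos_iff h₁ h₂).mp hH]

lemma sq_div_eight_le_of_mem_symImplementable {A p : ℝ} (hA : A ∈ Ioc (0:ℝ) 1)
    (hp : p ∈ symImplementable A) : A ^ 2 / 8 ≤ p := by
  obtain ⟨⟨hp0, -⟩, hH⟩ := hp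
  have hsym := (H_nonpos_iff hp0 hp0).mp hH
  have hM := sq_div_sixteen_le_M1 hA hp0.le
  nlinarith [mul_pos hp0 hp0, mul_pos (mul_pos hp0 hp0) hp0]

lemma bddBelow_symImplementable {A : ℝ} (hA : A ∈ Ioc (0:ℝ) 1) :
    BddBelow (symImplementable A) :=
  ⟨_, fun _ => sq_div_eight_le_of_mem_symImplementable hA⟩

lemma csInf_mem_symImplementable {A : ℝ} (hA : A ∈ Ioc (0:ℝ) 1)
    (hne : (symImplementable A).Nonempty) : sInf (symImplementable A) ∈ symImplementable A := by
  set S := symImplementable A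
  set p₀ := sInf S
  have hbdd : BddBelow S := bddBelow_symImplementable hA
  have hp₀ : 0 < p₀ :=
    (by have := hA.1; positivity : 0 < A ^ 2 / 8).trans_le
      (le_csInf hne fun _ => sq_div_eight_le_of_mem_symImplementable hA)
  obtain ⟨p, hp⟩ := hne
  refine ⟨⟨hp₀, (csInf_le hbdd hp).trans hp.1.2⟩, ?_⟩
  rw [H_nonpos_iff hp₀ hp₀]
  have hsub : S ⊆ {q | 2 * (p₀ * M1 A p₀) ≤ (1 - q * q) * (q * q)} := by
    intro q hq
    have hle : p₀ ≤ q := csInf_le hbdd hq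
    have hmul : p₀ * M1 A p₀ ≤ q * M1 A q :=
      mul_le_mul hle (M1_monotone A hle) (M1_nonneg A p₀) (hp₀.le.trans hle)
    have hq_sym := (H_nonpos_iff hq.1.1 hq.1.1).mp hq.2
    simp only [mem_ofPred_eq]
    linarith
  have hclosed : IsClosed {q | 2 * (p₀ * M1 A p₀) ≤ (1 - q * q) * (q * q)} :=
    isClosed_le continuous_const (by fun_prop)
  have hp₀_mem := closure_minimal hsub hclosed (csInf_mem_closure ⟨p, hp⟩ hbdd)
  simp only [mem_ofPred_eq] at hp₀_mem
  linarith

theorem trade_probability_max_general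
    (A : ℝ) (hA : A ∈ Set.Ioo (0:ℝ) 1)
    (hne : {p : ℝ | p ∈ Set.Ioc (0:ℝ) 1 ∧ H A p p ≤ 0}.Nonempty)
    (plow : ℝ) (hplow : plow = sInf {p : ℝ | p ∈ Set.Ioc (0:ℝ) 1 ∧ H A p p ≤ 0}) :
    (plow, plow) ∈ implementableP A
      ∧ ∀ q ∈ implementableP A, plow^2 ≤ q.1 * q.2 := by
  have hA' : A ∈ Ioc (0:ℝ) 1 := Ioo_subset_Ioc_self hA
  change plow = sInf (symImplementable A) at hplow
  obtain ⟨⟨hpos, hle⟩, hH⟩ : plow ∈ symImplementable A :=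
    hplow ▸ csInf_mem_symImplementable hA' hne
  refine ⟨⟨hpos, hle, hpos, hle, hH⟩, fun ⟨q₁, q₂⟩ hq => ?_⟩
  have hg : plow ≤ √(q₁ * q₂) :=
    hplow ▸ csInf_le (bddBelow_symImplementable hA') (sqrt_mul_mem_symImplementable hq)
  calc plow ^ 2 ≤ √(q₁ * q₂) ^ 2 := by gcongr
    _ = q₁ * q₂ := Real.sq_sqrt (mul_pos hq.1 hq.2.2.1).le

/-- Trade probability is maximized at the lowest symmetric implementable price
(uniform case): `(p̲,p̲) ∈ P` and every `(p1,p2) ∈ P` has `p1·p2 ≥ p̲²`,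
i.e. the trade probability `1 - p1·p2` is maximized at `(p̲,p̲)`. -/
theorem trade_probability_max
    (A : ℝ) (hA : A ∈ Set.Ioo (0:ℝ) 1)
    (hlarge : ∀ q ∈ implementableP A, q.1 ≤ A ∧ q.2 ≤ A ∧ |q.1 - q.2| ≤ 1 - A)
    (hne : {p : ℝ | p ∈ Set.Ioc (0:ℝ) 1 ∧ H A p p ≤ 0}.Nonempty)
    (plow : ℝ) (hplow : plow = sInf {p : ℝ | p ∈ Set.Ioc (0:ℝ) 1 ∧ H A p p ≤ 0}) :
    (plow, plow) ∈ implementableP A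
      ∧ ∀ q ∈ implementableP A, plow^2 ≤ q.1 * q.2 :=
  trade_probability_max_general A hA hne plow hplow
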